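/- arXiv:2411.14024 — 13 statements merged into one kernel-verified Lean document; each statement's English description precedes it below -/
import Mathlib

section
/- Suppose v : ℝ → ℝ is a C³ solution of -c·v' + A·v·v' + B·v²·v' + (M+N)·v''' = 0 with v(r) ≠ 0 for all r, and suppose 3B·v⁴ + 4A·v³ - 6c·v² + 6(M+N)(2v·v'' - (v')²) = C₃ identically. Then I₂(r) = (B·v(r)⁴ + 2A·v(r)³ + 6(M+N)·v'(r)² - 6c·v(r)² + C₃)/v(r) is constant. -/
/-! Writing I₂ = P / v, the quotient rule gives (P / v)' = (P' v - P v') / v², and a direct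
computation shows P' v - P v' = v' · (I₃ - C₃), where I₃ is the left-hand side of `hI3`.
So I₂ has zero derivative on the level set I₃ = C₃. -/

theorem div_eq_div_of_deriv_mul_eq_mul_deriv {p v : ℝ → ℝ} (hp : Differentiable ℝ p)
    (hv : Differentiable ℝ v) (hv0 : ∀ r, v r ≠ 0)
    (hpv : ∀ r, deriv p r * v r = p r * deriv v r) (r s : ℝ) :
    p r / v r = p s / v s := by
  have hderiv : ∀ x, HasDerivAt (fun x => p x / v x) 0 x := fun x => by
    refine ((hp x).hasDerivAt.div (hv x).hasDerivAt (hv0 x)).congr_deriv ?_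
    rw [hpv x, sub_self, zero_div]
  exact is_const_of_deriv_eq_zero (fun x => (hderiv x).differentiableAt)
    (fun x => (hderiv x).deriv) r s

theorem hasDerivAt_secondIntegral_numerator (A B M N c C₃ : ℝ) {v : ℝ → ℝ}
    (hv : Differentiable ℝ v) (hv' : Differentiable ℝ (deriv v)) (r : ℝ) :
    HasDerivAt (fun r => B * (v r) ^ 4 + 2 * A * (v r) ^ 3 + 6 * (M + N) * (deriv v r) ^ 2
        - 6 * c * (v r) ^ 2 + C₃)
      (deriv v r * (4 * B * (v r) ^ 3 + 6 * A * (v r) ^ 2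
        + 12 * (M + N) * deriv^[2] v r - 12 * c * v r)) r := by
  have h₀ := (hv r).hasDerivAt
  have h₁ := (hv' r).hasDerivAt
  refine ((((((h₀.pow 4).const_mul B).add ((h₀.pow 3).const_mul (2 * A))).add
    ((h₁.pow 2).const_mul (6 * (M + N)))).sub ((h₀.pow 2).const_mul (6 * c))).add_const
    C₃).congr_deriv ?_
  simp only [Function.iterate_succ, Function.iterate_zero, Function.comp_apply, id_eq]
  push_cast
  ring

theorem stmt_3_general (A B M N c C₃ : ℝ)
    (v : ℝ → ℝ) (hv : ContDiff ℝ 3 v) (hvne : ∀ r : ℝ, v r ≠ 0)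
    (hI3 : ∀ r : ℝ,
      3 * B * (v r) ^ 4 + 4 * A * (v r) ^ 3 - 6 * c * (v r) ^ 2
        + 6 * (M + N) * (2 * v r * deriv^[2] v r - (deriv v r) ^ 2) = C₃) :
    ∀ r s : ℝ,
      (B * (v r) ^ 4 + 2 * A * (v r) ^ 3 + 6 * (M + N) * (deriv v r) ^ 2
          - 6 * c * (v r) ^ 2 + C₃) / v r
        = (B * (v s) ^ 4 + 2 * A * (v s) ^ 3 + 6 * (M + N) * (deriv v s) ^ 2
          - 6 * c * (v s) ^ 2 + C₃) / v s := by
  have hv₁ : Differentiable ℝ v := hv.differentiable (by norm_num)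
  have hv₂ : Differentiable ℝ (deriv v) := (hv.of_le (by norm_num)).differentiable_deriv_two
  have hnum := hasDerivAt_secondIntegral_numerator A B M N c C₃ hv₁ hv₂
  refine div_eq_div_of_deriv_mul_eq_mul_deriv (fun r => (hnum r).differentiableAt) hv₁ hvne ?_
  intro r
  rw [(hnum r).deriv]
  linear_combination deriv v r * hI3 r

/-- The function I₂ = (B·v⁴ + 2A·v³ + 6(M+N)·v₁² - 6c·v² + C₃)/v is constant along
nonvanishing solutions of the traveling-wave ODE on the level set I₃ = C₃. -/
theorem stmt_3 (A B M N c C₃ : ℝ) (hMN : M + N ≠ 0)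
    (v : ℝ → ℝ) (hv : ContDiff ℝ 3 v) (hvne : ∀ r : ℝ, v r ≠ 0)
    (hode : ∀ r : ℝ,
      -c * deriv v r + A * v r * deriv v r + B * (v r) ^ 2 * deriv v r
        + (M + N) * deriv^[3] v r = 0)
    (hI3 : ∀ r : ℝ,
      3 * B * (v r) ^ 4 + 4 * A * (v r) ^ 3 - 6 * c * (v r) ^ 2
        + 6 * (M + N) * (2 * v r * deriv^[2] v r - (deriv v r) ^ 2) = C₃) :
    ∀ r s : ℝ,
      (B * (v r) ^ 4 + 2 * A * (v r) ^ 3 + 6 * (M + N) * (deriv v r) ^ 2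
          - 6 * c * (v r) ^ 2 + C₃) / v r
        = (B * (v s) ^ 4 + 2 * A * (v s) ^ 3 + 6 * (M + N) * (deriv v s) ^ 2
          - 6 * c * (v s) ^ 2 + C₃) / v s :=
  stmt_3_general A B M N c C₃ v hv hvne hI3
end

section
/- If v : ℝ → ℝ satisfies the first-order equation 6(M+N)·v'(r)² = -B·v(r)⁴ - 2A·v(r)³ + 6c·v(r)² + C₂·v(r) - C₃ and is C³ with v(r) ≠ 0, then v satisfies the third-order ODE -c·v' + A·v·v' + B·v²·v' + (M+N)·v''' = 0. -/
/-!
Differentiating the first integral `6(M+N)v'² = P(v)` gives `v' · w = 0` with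
`w = 12(M+N)v'' - P'(v)`, and the traveling-wave expression is `w' / 12`.
Where `v' ≠ 0`, `w` vanishes on an open set, so `w' = 0` there; on the interior of the
zero set of `v'` both `v'` and `v'''` vanish. The closure of the first set and the second
set cover `ℝ`, so the continuous function `w'` vanishes everywhere.
-/

open Topology Set

theorem Continuous.eq_of_eqOn_of_eqOn_interior_compl {X Y : Type*} [TopologicalSpace X]
    [TopologicalSpace Y] [T2Space Y] {f g : X → Y} {s : Set X} (hf : Continuous f)
    (hg : Continuous g) (hs : EqOn f g s) (hsc : EqOn f g (interior sᶜ)) : f = g := by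
  funext x
  by_cases hx : x ∈ closure s
  · exact hs.closure hf hg hx
  · exact hsc (interior_compl (s := s) ▸ hx)

theorem iterate_deriv_eventuallyEq_zero {𝕜 F : Type*} [NontriviallyNormedField 𝕜]
    [NormedAddCommGroup F] [NormedSpace 𝕜 F] {f : 𝕜 → F} {x : 𝕜} (h : f =ᶠ[𝓝 x] 0) :
    ∀ n : ℕ, deriv^[n] f =ᶠ[𝓝 x] 0
  | 0 => h
  | n + 1 => by
    rw [Function.iterate_succ_apply']
    simpa using (iterate_deriv_eventuallyEq_zero h n).deriv

theorem eq_zero_of_mul_eq_zero_of_hasDerivAt {f g w : ℝ → ℝ} {a : ℝ} (hf : ContDiff ℝ 2 f)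
    (hg : Continuous g) (hw : ∀ x, HasDerivAt w (a * deriv^[2] f x + g x * f x) x)
    (hfw : ∀ x, f x * w x = 0) (x : ℝ) : a * deriv^[2] f x + g x * f x = 0 := by
  have hQ : Continuous fun x => a * deriv^[2] f x + g x * f x := by
    have := hf.continuous_iteratedDeriv 2 le_rfl
    rw [iteratedDeriv_eq_iterate] at this
    exact (continuous_const.mul this).add (hg.mul hf.continuous)
  have hopen : IsOpen {x | f x ≠ 0} := isOpen_ne_fun hf.continuous continuous_const
  suffices h : (fun x => a * deriv^[2] f x + g x * f x) = 0 from congrFun h x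
  refine hQ.eq_of_eqOn_of_eqOn_interior_compl continuous_const (s := {x | f x ≠ 0}) ?_ ?_
  · intro y hy
    have hw0 : w =ᶠ[𝓝 y] fun _ => 0 := by
      filter_upwards [hopen.mem_nhds hy] with z hz
      exact (mul_eq_zero.1 (hfw z)).resolve_left hz
    exact (hw y).unique ((hasDerivAt_const y 0).congr_of_eventuallyEq hw0)
  · intro y hy
    have hf0 : f =ᶠ[𝓝 y] 0 := by
      filter_upwards [mem_interior_iff_mem_nhds.1 hy] with z hz
      simpa using hz
    simp [(iterate_deriv_eventuallyEq_zero hf0 2).eq_of_nhds, hf0.eq_of_nhds]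

theorem stmt_4_general (A B M N c C₂ C₃ : ℝ)
    (v : ℝ → ℝ) (hv : ContDiff ℝ 3 v)
    (hfirst : ∀ r : ℝ,
      6 * (M + N) * (deriv v r) ^ 2
        = -B * (v r) ^ 4 - 2 * A * (v r) ^ 3 + 6 * c * (v r) ^ 2
          + C₂ * v r - C₃) :
    ∀ r : ℝ,
      -c * deriv v r + A * v r * deriv v r + B * (v r) ^ 2 * deriv v r
        + (M + N) * deriv^[3] v r = 0 := by
  intro r
  have hv' : ContDiff ℝ 2 (deriv v) := ContDiff.iterate_deriv' 2 1 hv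
  have hd (n : ℕ) (hn : (n : WithTop ℕ∞) < 3) (x : ℝ) :
      HasDerivAt (deriv^[n] v) (deriv^[n + 1] v x) x := by
    rw [Function.iterate_succ_apply', ← iteratedDeriv_eq_iterate]
    exact (hv.differentiable_iteratedDeriv n hn x).hasDerivAt
  have hd1 (x : ℝ) : HasDerivAt v (deriv v x) x := hd 0 (by norm_num) x
  have hd2 (x : ℝ) : HasDerivAt (deriv v) (deriv^[2] v x) x := hd 1 (by norm_num) x
  have hd3 (x : ℝ) : HasDerivAt (deriv^[2] v) (deriv^[3] v x) x := hd 2 (by norm_num) x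
  set w : ℝ → ℝ := fun x =>
    12 * (M + N) * deriv^[2] v x + 4 * B * v x ^ 3 + 6 * A * v x ^ 2 - 12 * c * v x - C₂
  have hw (x : ℝ) : HasDerivAt w (12 * (M + N) * deriv^[3] v x
      + 12 * (B * v x ^ 2 + A * v x - c) * deriv v x) x := by
    refine (((((hd3 x).const_mul (12 * (M + N))).add (((hd1 x).pow 3).const_mul (4 * B))).add
      (((hd1 x).pow 2).const_mul (6 * A))).sub ((hd1 x).const_mul (12 * c))).sub_const C₂
      |>.congr_deriv ?_
    push_cast
    ring
  have hfw (x : ℝ) : deriv v x * w x = 0 := by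
    have hlhs := ((hd2 x).pow 2).const_mul (6 * (M + N))
    have hrhs := (((((hd1 x).pow 4).const_mul (-B)).sub (((hd1 x).pow 3).const_mul (2 * A))).add
      (((hd1 x).pow 2).const_mul (6 * c))).add ((hd1 x).const_mul C₂) |>.sub_const C₃
    have := hlhs.unique <| hrhs.congr_of_eventuallyEq <| .of_forall fun y => by
      simp only [Pi.pow_apply, Pi.add_apply, Pi.sub_apply]
      linarith [hfirst y]
    push_cast at this
    linear_combination this
  have hw' : 12 * (M + N) * deriv^[3] v r + 12 * (B * v r ^ 2 + A * v r - c) * deriv v r = 0 :=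
    eq_zero_of_mul_eq_zero_of_hasDerivAt hv' (by fun_prop) hw hfw r
  linear_combination hw' / 12

/-- Solutions of the reduced first-order equation solve the original third-order
traveling-wave ODE of the mZK equation. -/
theorem stmt_4 (A B M N c C₂ C₃ : ℝ) (hMN : M + N ≠ 0)
    (v : ℝ → ℝ) (hv : ContDiff ℝ 3 v) (hvne : ∀ r : ℝ, v r ≠ 0)
    (hfirst : ∀ r : ℝ,
      6 * (M + N) * (deriv v r) ^ 2
        = -B * (v r) ^ 4 - 2 * A * (v r) ^ 3 + 6 * c * (v r) ^ 2
          + C₂ * v r - C₃) :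
    ∀ r : ℝ,
      -c * deriv v r + A * v r * deriv v r + B * (v r) ^ 2 * deriv v r
        + (M + N) * deriv^[3] v r = 0 :=
  stmt_4_general A B M N c C₂ C₃ v hv hfirst
end

section
/- Let A ≠ 0 and M + N ≠ 0. The function v(r) = -12(M+N)/(A·(C₁ - r)²) + c/A, defined for r ≠ C₁, satisfies the ODE -c·v' + A·v·v' + (M+N)·v''' = 0 (the case B = 0). -/
/-! Up to constants the profile is `v = a (r - C₁)⁻² + b`, whose derivatives are explicit
Laurent monomials: `v' = -2a (r - C₁)⁻³` and `v''' = -24a (r - C₁)⁻⁵`. Once `A a = -12 (M + N)`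
and `A b = c`, both terms of the ODE are multiples of `(r - C₁)⁻⁵` and cancel. -/

open Finset

section InverseSquareProfile

variable {𝕜 : Type*} [NontriviallyNormedField 𝕜]

theorem iteratedDeriv_const_mul_zpow_sub_add {n : ℕ} (hn : 0 < n) (a b x₀ : 𝕜) (m : ℤ)
    (x : 𝕜) :
    iteratedDeriv n (fun y => a * (y - x₀) ^ m + b) x =
      a * (∏ i ∈ range n, ((m : 𝕜) - i)) * (x - x₀) ^ (m - n) := by
  simp_rw [add_comm _ b]
  rw [iteratedDeriv_const_add hn, iteratedDeriv_const_mul_field, mul_assoc,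
    iteratedDeriv_comp_sub_const n (fun y => y ^ m), iteratedDeriv_eq_iterate]
  exact congrArg (a * ·) (iter_deriv_zpow m (x - x₀) n)

def inverseSquareProfile (a b x₀ : 𝕜) : 𝕜 → 𝕜 := fun y => a * (y - x₀) ^ (-2 : ℤ) + b

theorem inverseSquareProfile_travelling_wave_ode {A K c a b x₀ : 𝕜}
    (ha : A * a = -12 * K) (hb : A * b = c) {x : 𝕜} (hx : x ≠ x₀) :
    -c * deriv (inverseSquareProfile a b x₀) x
      + A * inverseSquareProfile a b x₀ x * deriv (inverseSquareProfile a b x₀) x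
      + K * deriv^[3] (inverseSquareProfile a b x₀) x = 0 := by
  have hu : x - x₀ ≠ 0 := sub_ne_zero.mpr hx
  rw [← iteratedDeriv_one, ← iteratedDeriv_eq_iterate]
  unfold inverseSquareProfile
  rw [iteratedDeriv_const_mul_zpow_sub_add one_pos, iteratedDeriv_const_mul_zpow_sub_add three_pos]
  norm_num [prod_range_succ]
  rw [← hb]
  field_simp
  linear_combination (-2 * a) * ha

end InverseSquareProfile

theorem stmt_5_general (A M N c C₁ : ℝ) (hA : A ≠ 0)
    (v : ℝ → ℝ)
    (hvdef : ∀ r : ℝ, v r = -12 * (M + N) / (A * (C₁ - r) ^ 2) + c / A) :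
    ∀ r : ℝ, r ≠ C₁ →
      -c * deriv v r + A * v r * deriv v r + (M + N) * deriv^[3] v r = 0 := by
  intro r hr
  have hv : v = inverseSquareProfile (-12 * (M + N) / A) (c / A) C₁ := by
    -- an identity for every `y`: at `y = C₁` both sides are `c / A`, as `x / 0 = 0 = 0 ^ (-2)`
    funext y
    rw [hvdef, inverseSquareProfile, zpow_neg, zpow_ofNat, ← neg_sub, neg_sq, mul_comm A,
      div_mul_eq_div_div_swap, div_eq_mul_inv _ ((y - C₁) ^ 2)]
  rw [hv]
  exact inverseSquareProfile_travelling_wave_ode (A := A) (K := M + N) (c := c)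
    (by field_simp) (by field_simp) hr

/-- The rational traveling-wave solution corresponding to a triple root of the
cubic polynomial (case B = 0) solves the reduced ODE. -/
theorem stmt_5 (A M N c C₁ : ℝ) (hA : A ≠ 0) (hMN : M + N ≠ 0)
    (v : ℝ → ℝ)
    (hvdef : ∀ r : ℝ, v r = -12 * (M + N) / (A * (C₁ - r) ^ 2) + c / A) :
    ∀ r : ℝ, r ≠ C₁ →
      -c * deriv v r + A * v r * deriv v r + (M + N) * deriv^[3] v r = 0 :=
  stmt_5_general A M N c C₁ hA v hvdef
end

section
/- Let A ≠ 0, M + N > 0, c - A·φ > 0, and let v(r) = φ + 6(c - Aφ)/(A·(1 + cosh(√((c - Aφ)/(M+N))·(C₁ - r)))). Then v satisfies the ODE -c·v' + A·v·v' + (M+N)·v''' = 0 on the set where the denominator is nonzero. -/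
/-!
The profile `p x = (1 + cosh x)⁻¹ = sech² (x / 2) / 2` satisfies `p'' = p - 3 p²`. Hence
`v r = φ + K p (k (C₁ - r))` satisfies `μ v'' = c v - (A / 2) v² + B` with `B = A φ² / 2 - c φ`
as soon as `μ k² = c - A φ` and `A K = 6 (c - A φ)`, and differentiating this once-integrated
equation gives `-c v' + A v v' + μ v''' = 0`.
-/

open Real

noncomputable def solitonProfile (x : ℝ) : ℝ := (1 + cosh x)⁻¹

lemma hasDerivAt_solitonProfile (x : ℝ) :
    HasDerivAt solitonProfile (-sinh x * solitonProfile x ^ 2) x := by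
  have hx : 1 + cosh x ≠ 0 := by positivity
  refine (((hasDerivAt_cosh x).const_add 1).inv hx).congr_deriv ?_
  rw [solitonProfile, inv_pow, div_eq_mul_inv]

lemma differentiable_solitonProfile : Differentiable ℝ solitonProfile :=
  fun x => (hasDerivAt_solitonProfile x).differentiableAt

lemma deriv_solitonProfile :
    deriv solitonProfile = fun x => -sinh x * solitonProfile x ^ 2 :=
  funext fun x => (hasDerivAt_solitonProfile x).deriv

lemma deriv_deriv_solitonProfile :
    deriv (deriv solitonProfile) = fun x => solitonProfile x - 3 * solitonProfile x ^ 2 := by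
  funext x
  set p := solitonProfile x
  have hp : (1 + cosh x) * p = 1 := mul_inv_cancel₀ (by positivity)
  have h := ((hasDerivAt_sinh x).fun_neg).fun_mul ((hasDerivAt_solitonProfile x).fun_pow 2)
  rw [deriv_solitonProfile, h.deriv]
  push_cast
  linear_combination (2 * p ^ 3) * sinh_sq x + (2 * p ^ 2 * (cosh x - 1) + p) * hp

lemma deriv_comp_mul_const_sub (f : ℝ → ℝ) (k C : ℝ) :
    deriv (fun r => f (k * (C - r))) = fun r => -k * deriv f (k * (C - r)) := by
  funext r
  rw [deriv_comp_const_sub (f := fun y => f (k * y)), deriv_comp_mul_left, smul_eq_mul, neg_mul]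

lemma deriv_deriv_comp_mul_const_sub (f : ℝ → ℝ) (k C : ℝ) :
    deriv (deriv fun r => f (k * (C - r))) =
      fun r => k ^ 2 * deriv (deriv f) (k * (C - r)) := by
  rw [deriv_comp_mul_const_sub, deriv_const_mul_field', deriv_comp_mul_const_sub]
  funext r
  ring

lemma kdv_travelingWave_of_integrated {v : ℝ → ℝ} {A c μ B : ℝ} (hv : Differentiable ℝ v)
    (hint : ∀ r, μ * deriv (deriv v) r = c * v r - A / 2 * v r ^ 2 + B) (r : ℝ) :
    -c * deriv v r + A * v r * deriv v r + μ * deriv^[3] v r = 0 := by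
  have hrhs : HasDerivAt (fun r => c * v r - A / 2 * v r ^ 2 + B)
      (c * deriv v r - A / 2 * (2 * v r * deriv v r)) r := by
    have hvr := (hv r).hasDerivAt
    simpa using ((hvr.const_mul c).sub ((hvr.pow 2).const_mul (A / 2))).add_const B
  have h3 : μ * deriv^[3] v r = c * deriv v r - A * v r * deriv v r :=
    calc μ * deriv^[3] v r = deriv (fun r => μ * deriv (deriv v) r) r := by
          rw [deriv_const_mul_field']; rfl
      _ = deriv (fun r => c * v r - A / 2 * v r ^ 2 + B) r := by rw [funext hint]
      _ = c * deriv v r - A * v r * deriv v r := by rw [hrhs.deriv]; ring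
  linear_combination h3

noncomputable def solitaryWave (φ K k C : ℝ) : ℝ → ℝ :=
  fun r => φ + K * solitonProfile (k * (C - r))

lemma differentiable_solitaryWave (φ K k C : ℝ) : Differentiable ℝ (solitaryWave φ K k C) := by
  have := differentiable_solitonProfile
  unfold solitaryWave
  fun_prop

lemma deriv_deriv_solitaryWave (φ K k C : ℝ) :
    deriv (deriv (solitaryWave φ K k C)) = fun r =>
      K * (k ^ 2 * (solitonProfile (k * (C - r)) - 3 * solitonProfile (k * (C - r)) ^ 2)) := by
  unfold solitaryWave
  rw [deriv_const_add', deriv_const_mul_field', deriv_const_mul_field',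
    deriv_deriv_comp_mul_const_sub, deriv_deriv_solitonProfile]

lemma solitaryWave_integrated {A μ c φ k K C : ℝ} (hk : μ * k ^ 2 = c - A * φ)
    (hK : A * K = 6 * (c - A * φ)) (r : ℝ) :
    μ * deriv (deriv (solitaryWave φ K k C)) r =
      c * solitaryWave φ K k C r - A / 2 * solitaryWave φ K k C r ^ 2 +
        (A / 2 * φ ^ 2 - c * φ) := by
  rw [deriv_deriv_solitaryWave, solitaryWave]
  set p := solitonProfile (k * (C - r))
  linear_combination K * (p - 3 * p ^ 2) * hk + K * p ^ 2 / 2 * hK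

/-- The solitary-wave solution of the B = 0 traveling-wave ODE corresponding to a
double root φ with c - Aφ > 0 and M + N > 0. -/
theorem stmt_6 (A M N c φ C₁ : ℝ) (hA : A ≠ 0) (hMN : 0 < M + N)
    (hφ : 0 < c - A * φ) (v : ℝ → ℝ)
    (hvdef : ∀ r : ℝ, v r = φ + 6 * (c - A * φ) /
      (A * (1 + Real.cosh (Real.sqrt ((c - A * φ) / (M + N)) * (C₁ - r))))) :
    ∀ r : ℝ,
      A * (1 + Real.cosh (Real.sqrt ((c - A * φ) / (M + N)) * (C₁ - r))) ≠ 0 →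
      -c * deriv v r + A * v r * deriv v r + (M + N) * deriv^[3] v r = 0 := by
  intro r _
  set k := √((c - A * φ) / (M + N))
  have hk : (M + N) * k ^ 2 = c - A * φ := by
    rw [sq_sqrt (by positivity)]
    field_simp
  have hK : A * (6 * (c - A * φ) / A) = 6 * (c - A * φ) := by field_simp
  have hv : v = solitaryWave φ (6 * (c - A * φ) / A) k C₁ := by
    funext r
    rw [hvdef, solitaryWave, solitonProfile, ← div_eq_mul_inv, div_mul_eq_div_div]
  rw [hv]
  exact kdv_travelingWave_of_integrated (differentiable_solitaryWave _ _ _ _)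
    (solitaryWave_integrated hk hK) r
end

section
/- Let B ≠ 0, K = -6(M+N)/B > 0, and c = -A²/(4B). Then v(r) = -A/(2B) + √K/(C₁ - r), defined for r ≠ C₁, satisfies -c·v' + A·v·v' + B·v²·v' + (M+N)·v''' = 0. -/
/-!
Since c = -A²/(4B), completing the square gives -c + A v + B v² = B (v + A/(2B))² = B K/(C₁ - r)².
With v' = √K/(C₁ - r)² and v''' = 6√K/(C₁ - r)⁴ the left-hand side becomes
√K (B K + 6(M + N))/(C₁ - r)⁴, which vanishes by the choice of K.
-/

open Nat

theorem iter_deriv_const_add_div_sub {𝕜 : Type*} [NontriviallyNormedField 𝕜]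
    {k : ℕ} (hk : 0 < k) (a s C x : 𝕜) :
    deriv^[k] (fun y => a + s / (C - y)) x = s * k ! / (C - x) ^ (k + 1) := by
  have hlin : deriv^[k] (fun y => ((-1) * y + C)⁻¹) x = k ! * ((C - x) ^ (k + 1))⁻¹ := by
    have hexp : (-1 - k : ℤ) = -((k + 1 : ℕ) : ℤ) := by push_cast; ring
    have hsign : ((-1 : 𝕜) ^ k) * (-1) ^ k = 1 := by rw [← mul_pow]; norm_num
    rw [iter_deriv_inv_linear]
    beta_reduce
    rw [hexp, zpow_neg, zpow_natCast, neg_one_mul, neg_add_eq_sub]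
    linear_combination (k ! * ((C - x) ^ (k + 1))⁻¹) * hsign
  simp only [← iteratedDeriv_eq_iterate, iteratedDeriv_const_add hk, div_eq_mul_inv,
    iteratedDeriv_const_mul_field] at hlin ⊢
  simp only [neg_one_mul, neg_add_eq_sub] at hlin
  rw [hlin, mul_assoc]

lemma neg_add_mul_add_mul_sq_eq {K : Type*} [Field K] [NeZero (2 : K)] {A B c : K} (hB : B ≠ 0)
    (hc : c = -A ^ 2 / (4 * B)) (v : K) :
    -c + A * v + B * v ^ 2 = B * (v + A / (2 * B)) ^ 2 := by
  have h4 : (4 : K) ≠ 0 := by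
    rw [show (4 : K) = 2 * 2 by norm_num]; exact mul_ne_zero two_ne_zero two_ne_zero
  subst hc
  field_simp
  ring

/-- The rational solution corresponding to the quadruple root -A/(2B) of the
quartic polynomial, with c = -A²/(4B) and K = -6(M+N)/B > 0. -/
theorem stmt_8 (A B M N c C₁ K : ℝ) (hB : B ≠ 0)
    (hK : K = -6 * (M + N) / B) (hKpos : 0 < K)
    (hc : c = -A ^ 2 / (4 * B)) (v : ℝ → ℝ)
    (hvdef : ∀ r : ℝ, v r = -A / (2 * B) + Real.sqrt K / (C₁ - r)) :
    ∀ r : ℝ, r ≠ C₁ →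
      -c * deriv v r + A * v r * deriv v r + B * (v r) ^ 2 * deriv v r
        + (M + N) * deriv^[3] v r = 0 := by
  intro r _
  have hv : v = fun x => -A / (2 * B) + √K / (C₁ - x) := funext hvdef
  have hv1 : deriv v r = √K / (C₁ - r) ^ 2 := by
    rw [hv, ← Function.iterate_one deriv, iter_deriv_const_add_div_sub one_pos]
    simp
  have hv3 : deriv^[3] v r = 6 * √K / (C₁ - r) ^ 4 := by
    rw [hv, iter_deriv_const_add_div_sub three_pos]
    norm_num [factorial, mul_comm]
  have hBK : B * √K ^ 2 = -6 * (M + N) := by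
    rw [Real.sq_sqrt hKpos.le, hK]; field_simp
  calc -c * deriv v r + A * v r * deriv v r + B * (v r) ^ 2 * deriv v r
        + (M + N) * deriv^[3] v r
      = (-c + A * v r + B * v r ^ 2) * deriv v r + (M + N) * deriv^[3] v r := by ring
    _ = √K / (C₁ - r) ^ 4 * (B * √K ^ 2 + 6 * (M + N)) := by
        rw [neg_add_mul_add_mul_sq_eq hB hc, hvdef, hv1, hv3]
        generalize C₁ - r = w
        ring
    _ = 0 := by rw [hBK]; ring
end

section
/- The quartic B·z⁴ + 2A·z³ - 6c·z² - C₂·z + C₃ with B ≠ 0, C₂ = A(A² + 6Bc)/B², C₃ = (A² + 6Bc)²/(4B³), and A² + 4Bc > 0, factors as B·(z - φ₁)²·(z - φ₂)² where φ₁ = -(A + √(3(A² + 4Bc)))/(2B) and φ₂ = -(A - √(3(A² + 4Bc)))/(2B). -/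
/-!
The quartic is `B` times the square of the monic quadratic `z² + (A/B) z - (A² + 6Bc)/(2B²)`,
and the roots of that quadratic are `φ₁, φ₂`: their sum is `-A/B`, and their product is
`-(A² + 6Bc)/(2B²)` because `(√(3(A² + 4Bc)))² = 3(A² + 4Bc)` once the radicand is positive.
-/

section QuarticFactorization

variable {K : Type*} [Field K]

theorem quartic_eq_mul_sq_quadratic (A B c z : K) (hB : B ≠ 0) (h2 : (2 : K) ≠ 0) :
    B * z ^ 4 + 2 * A * z ^ 3 - 6 * c * z ^ 2 - A * (A ^ 2 + 6 * B * c) / B ^ 2 * z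
        + (A ^ 2 + 6 * B * c) ^ 2 / (4 * B ^ 3)
      = B * (z ^ 2 + A / B * z - (A ^ 2 + 6 * B * c) / (2 * B ^ 2)) ^ 2 := by
  have h4 : (4 : K) ≠ 0 := by
    convert mul_ne_zero h2 h2 using 1; norm_num
  field_simp
  ring

theorem sub_mul_sub_eq_quadratic {A B c s : K} (hB : B ≠ 0) (h2 : (2 : K) ≠ 0)
    (hs : s ^ 2 = 3 * (A ^ 2 + 4 * B * c)) (z : K) :
    (z - -(A + s) / (2 * B)) * (z - -(A - s) / (2 * B))
      = z ^ 2 + A / B * z - (A ^ 2 + 6 * B * c) / (2 * B ^ 2) := by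
  field_simp
  linear_combination -hs

end QuarticFactorization

/-- The quartic P(z) with the indicated coefficients factors with two distinct
real double roots φ₁ and φ₂. -/
theorem stmt_9 (A B c C₂ C₃ φ₁ φ₂ : ℝ) (hB : B ≠ 0)
    (hdisc : 0 < A ^ 2 + 4 * B * c)
    (hC₂ : C₂ = A * (A ^ 2 + 6 * B * c) / B ^ 2)
    (hC₃ : C₃ = (A ^ 2 + 6 * B * c) ^ 2 / (4 * B ^ 3))
    (hφ₁ : φ₁ = -(A + Real.sqrt (3 * (A ^ 2 + 4 * B * c))) / (2 * B))
    (hφ₂ : φ₂ = -(A - Real.sqrt (3 * (A ^ 2 + 4 * B * c))) / (2 * B)) :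
    ∀ z : ℝ,
      B * z ^ 4 + 2 * A * z ^ 3 - 6 * c * z ^ 2 - C₂ * z + C₃
        = B * (z - φ₁) ^ 2 * (z - φ₂) ^ 2 := by
  intro z
  have hs : Real.sqrt (3 * (A ^ 2 + 4 * B * c)) ^ 2 = 3 * (A ^ 2 + 4 * B * c) :=
    Real.sq_sqrt (by positivity)
  subst hC₂ hC₃ hφ₁ hφ₂
  rw [quartic_eq_mul_sq_quadratic A B c z hB two_ne_zero,
    ← sub_mul_sub_eq_quadratic hB two_ne_zero hs z]
  ring
end

section
/- Let B ≠ 0, K = -6(M+N)/B > 0, A² + 4Bc > 0, and set φ₁ = -(A + √(3(A²+4Bc)))/(2B), φ₂ = -(A - √(3(A²+4Bc)))/(2B). Then v(r) = φ₁ + (φ₂ - φ₁)/(1 + exp(-((φ₁ - φ₂)/√K)·(C₁ - r))) satisfies -c·v' + A·v·v' + B·v²·v' + (M+N)·v''' = 0. -/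
/-!
The profile `v` is a logistic curve, so it solves the autonomous equation
`v' = (v - φ₁)(φ₂ - v)/√K`. Hence every derivative of `v` is a polynomial in `v`, and the
equation becomes a polynomial identity in `v r`. That identity holds because
`-c + A w + B w² = B (w - φ₁)(w - φ₂) + B (φ₂ - φ₁)²/6`, which is how `φ₁, φ₂` are chosen,
together with `(M + N) / K = -B/6`.
-/

open Real Polynomial

theorem iterate_deriv_eq_eval_of_hasDerivAt_eval {𝕜 : Type*} [NontriviallyNormedField 𝕜]
    {f : 𝕜 → 𝕜} {P : 𝕜[X]} (hf : ∀ x, HasDerivAt f (P.eval (f x)) x) (n : ℕ) :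
    deriv^[n] f = fun x => ((fun Q => derivative Q * P)^[n] X).eval (f x) := by
  induction n with
  | zero => simp
  | succ n ih =>
    funext x
    rw [Function.iterate_succ_apply', ih, Function.iterate_succ_apply', eval_mul]
    exact (((_ : 𝕜[X]).hasDerivAt (f x)).comp x (hf x)).deriv

noncomputable def logistic (p q k r₀ r : ℝ) : ℝ := p + q / (1 + exp (k * q * (r₀ - r)))

theorem hasDerivAt_logistic (p q k r₀ x : ℝ) :
    HasDerivAt (logistic p q k r₀)
      (k * (logistic p q k r₀ x - p) * (p + q - logistic p q k r₀ x)) x := by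
  have hE : HasDerivAt (fun r => exp (k * q * (r₀ - r)))
      (-(exp (k * q * (r₀ - x)) * (k * q))) x := by
    simpa using (((hasDerivAt_id x).const_sub r₀).const_mul (k * q)).exp
  have hpos : 0 < 1 + exp (k * q * (r₀ - x)) := by positivity
  have h := (((hE.const_add 1).inv hpos.ne').const_mul q).const_add p
  refine h.congr_deriv ?_
  simp only [logistic]
  field_simp
  ring

theorem quadratic_eq_of_kink_endpoints {A B c s φ₁ φ₂ : ℝ} (hB : B ≠ 0)
    (hs : s ^ 2 = 3 * (A ^ 2 + 4 * B * c))
    (hφ₁ : φ₁ = -(A + s) / (2 * B)) (hφ₂ : φ₂ = -(A - s) / (2 * B)) (w : ℝ) :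
    -c + A * w + B * w ^ 2 = B * (w - φ₁) * (w - φ₂) + B * (φ₂ - φ₁) ^ 2 / 6 := by
  subst hφ₁ hφ₂
  field_simp
  linear_combination 2 * hs

/-- The kink traveling-wave solution corresponding to two real double roots of
the quartic polynomial P. -/
theorem stmt_10 (A B M N c C₁ K φ₁ φ₂ : ℝ) (hB : B ≠ 0)
    (hK : K = -6 * (M + N) / B) (hKpos : 0 < K)
    (hdisc : 0 < A ^ 2 + 4 * B * c)
    (hφ₁ : φ₁ = -(A + Real.sqrt (3 * (A ^ 2 + 4 * B * c))) / (2 * B))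
    (hφ₂ : φ₂ = -(A - Real.sqrt (3 * (A ^ 2 + 4 * B * c))) / (2 * B))
    (v : ℝ → ℝ)
    (hvdef : ∀ r : ℝ, v r = φ₁ + (φ₂ - φ₁) /
      (1 + Real.exp (-((φ₁ - φ₂) / Real.sqrt K) * (C₁ - r)))) :
    ∀ r : ℝ,
      -c * deriv v r + A * v r * deriv v r + B * (v r) ^ 2 * deriv v r
        + (M + N) * deriv^[3] v r = 0 := by
  have hv : v = logistic φ₁ (φ₂ - φ₁) (√K)⁻¹ C₁ := by
    funext r; rw [hvdef, logistic]; ring_nf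
  set P : ℝ[X] := C (√K)⁻¹ * (X - C φ₁) * (C φ₂ - X)
  have hode : ∀ x, HasDerivAt v (P.eval (v x)) x := fun x => by
    simpa [P, ← hv] using hasDerivAt_logistic φ₁ (φ₂ - φ₁) (√K)⁻¹ C₁ x
  have hMN : M + N = -(K * B) / 6 := by rw [hK]; field_simp
  have hKinv : K * (√K)⁻¹ ^ 2 = 1 := by
    rw [inv_pow, sq_sqrt hKpos.le, mul_inv_cancel₀ hKpos.ne']
  have hquad := quadratic_eq_of_kink_endpoints hB (sq_sqrt (by linarith)) hφ₁ hφ₂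
  intro r
  rw [(hode r).deriv, iterate_deriv_eq_eval_of_hasDerivAt_eval hode]
  simp only [P, hMN, Function.iterate_succ, Function.iterate_zero, Function.comp_apply, id_eq,
    derivative_mul, derivative_add, derivative_sub, derivative_C, derivative_X, derivative_one,
    derivative_zero, eval_mul, eval_add, eval_sub, eval_C, eval_X, eval_zero, eval_one]
  linear_combination (√K)⁻¹ * (v r - φ₁) * (φ₂ - v r) * (hquad (v r)
    - B / 6 * (6 * (v r - φ₁) * (v r - φ₂) + (φ₂ - φ₁) ^ 2) * hKinv)
end

section
/- Let B ≠ 0, K = -6(M+N)/B > 0, A² + 4Bc < 0, a = -A/(2B), b = √(-3(A² + 4Bc))/(2B). Then v(r) = a - b·tan((b/√K)·(C₁ - r)) satisfies -c·v' + A·v·v' + B·v²·v' + (M+N)·v''' = 0 on any interval where the tangent is defined. -/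
/-!
With `T r = tan (k (C₁ - r))` and `k = b / √K`, the function `T` solves the Riccati equation
`T' = -k (1 + T²)`, so every derivative of `v = a - b T` is a polynomial in `T`:
`v' = b k (1 + T²)` and `v''' = 2 b k³ (1 + T²)(1 + 3 T²)`. The choice `a = -A / (2B)` kills the
linear term of `-c + A v + B v²`, and the value of `b` makes it `-(c + B a²)(1 + 3 T²)`;
the value of `K` makes `2 (M + N) k² = c + B a²`, so the two sides of the equation cancel.
-/

open Set

theorem eqOn_iterate_deriv_three {𝕜 F : Type*} [NontriviallyNormedField 𝕜]
    [NormedAddCommGroup F] [NormedSpace 𝕜 F] {f f₁ f₂ f₃ : 𝕜 → F} {U : Set 𝕜} (hU : IsOpen U)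
    (h₀ : ∀ x ∈ U, HasDerivAt f (f₁ x) x) (h₁ : ∀ x ∈ U, HasDerivAt f₁ (f₂ x) x)
    (h₂ : ∀ x ∈ U, HasDerivAt f₂ (f₃ x) x) : EqOn (deriv^[3] f) f₃ U := by
  have e₁ : EqOn (deriv f) f₁ U := fun x hx => (h₀ x hx).deriv
  have e₂ : EqOn (deriv (deriv f)) f₂ U :=
    (e₁.deriv hU).trans fun x hx => (h₁ x hx).deriv
  exact (e₂.deriv hU).trans fun x hx => (h₂ x hx).deriv

section Riccati

variable {T : ℝ → ℝ} {k x : ℝ}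

theorem HasDerivAt.affine_of_riccati (hT : HasDerivAt T (-k * (1 + T x ^ 2)) x) (a b : ℝ) :
    HasDerivAt (fun y => a - b * T y) (b * k * (1 + T x ^ 2)) x :=
  ((hT.const_mul b).const_sub a).congr_deriv (by ring)

theorem HasDerivAt.one_add_sq_of_riccati (hT : HasDerivAt T (-k * (1 + T x ^ 2)) x) :
    HasDerivAt (fun y => 1 + T y ^ 2) (-2 * k * T x * (1 + T x ^ 2)) x :=
  ((hT.pow 2).const_add 1).congr_deriv (by ring)

theorem HasDerivAt.deriv_affine_of_riccati (hT : HasDerivAt T (-k * (1 + T x ^ 2)) x) (b : ℝ) :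
    HasDerivAt (fun y => b * k * (1 + T y ^ 2)) (-2 * b * k ^ 2 * (T x * (1 + T x ^ 2))) x :=
  (hT.one_add_sq_of_riccati.const_mul (b * k)).congr_deriv (by ring)

theorem HasDerivAt.deriv_deriv_affine_of_riccati (hT : HasDerivAt T (-k * (1 + T x ^ 2)) x)
    (b : ℝ) :
    HasDerivAt (fun y => -2 * b * k ^ 2 * (T y * (1 + T y ^ 2)))
      (2 * b * k ^ 3 * (1 + T x ^ 2) * (1 + 3 * T x ^ 2)) x :=
  ((hT.mul hT.one_add_sq_of_riccati).const_mul (-2 * b * k ^ 2)).congr_deriv (by ring)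

end Riccati

theorem hasDerivAt_tan_mul_sub {k C x : ℝ} (h : Real.cos (k * (C - x)) ≠ 0) :
    HasDerivAt (fun y => Real.tan (k * (C - y))) (-k * (1 + Real.tan (k * (C - x)) ^ 2)) x := by
  have hlin : HasDerivAt (fun y => k * (C - y)) (-k) x := by
    simpa using ((hasDerivAt_id x).const_sub C).const_mul k
  refine ((Real.hasDerivAt_tan h).comp x hlin).congr_deriv ?_
  rw [Real.tan_eq_sin_div_cos]
  field_simp
  linear_combination k * Real.sin_sq_add_cos_sq (k * (C - x))

theorem ode_residual_eq_zero {A B c MN a b k : ℝ} (hA : A = -2 * B * a)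
    (hb : B * b ^ 2 = -3 * (c + B * a ^ 2)) (hk : 2 * MN * k ^ 2 = c + B * a ^ 2) (t : ℝ) :
    -c * (b * k * (1 + t ^ 2)) + A * (a - b * t) * (b * k * (1 + t ^ 2))
      + B * (a - b * t) ^ 2 * (b * k * (1 + t ^ 2))
      + MN * (2 * b * k ^ 3 * (1 + t ^ 2) * (1 + 3 * t ^ 2)) = 0 := by
  linear_combination (b * k * (1 + t ^ 2)) * ((a - b * t) * hA + t ^ 2 * hb
    + (1 + 3 * t ^ 2) * hk)

theorem mul_sq_eq_of_sqrt_disc {A B c a b : ℝ} (hB : B ≠ 0) (hdisc : A ^ 2 + 4 * B * c < 0)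
    (ha : a = -A / (2 * B)) (hb : b = Real.sqrt (-3 * (A ^ 2 + 4 * B * c)) / (2 * B)) :
    B * b ^ 2 = -3 * (c + B * a ^ 2) := by
  rw [hb, ha, div_pow, Real.sq_sqrt (by linarith)]
  field_simp
  ring

theorem two_mul_sq_div_sqrt_eq {B MN K b : ℝ} (hB : B ≠ 0) (hK : K = -6 * MN / B) (hKpos : 0 < K)
    (C : ℝ) (hb : B * b ^ 2 = -3 * C) : 2 * MN * (b / Real.sqrt K) ^ 2 = C := by
  rw [div_pow, Real.sq_sqrt hKpos.le]
  have hMN : MN = -K * B / 6 := by rw [hK]; field_simp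
  rw [hMN]
  field_simp
  linear_combination -2 * hb

/-- The singular periodic solution corresponding to a pair of complex conjugate
double roots of the quartic polynomial P. -/
theorem stmt_11 (A B M N c C₁ K a b : ℝ) (hB : B ≠ 0)
    (hK : K = -6 * (M + N) / B) (hKpos : 0 < K)
    (hdisc : A ^ 2 + 4 * B * c < 0)
    (ha : a = -A / (2 * B))
    (hb : b = Real.sqrt (-3 * (A ^ 2 + 4 * B * c)) / (2 * B))
    (v : ℝ → ℝ)
    (hvdef : ∀ r : ℝ, v r = a - b * Real.tan ((b / Real.sqrt K) * (C₁ - r))) :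
    ∀ r : ℝ, Real.cos ((b / Real.sqrt K) * (C₁ - r)) ≠ 0 →
      -c * deriv v r + A * v r * deriv v r + B * (v r) ^ 2 * deriv v r
        + (M + N) * deriv^[3] v r = 0 := by
  intro r hr
  set k := b / Real.sqrt K
  set T := fun y => Real.tan (k * (C₁ - y))
  set U := {y | Real.cos (k * (C₁ - y)) ≠ 0}
  have hU : IsOpen U := isOpen_ne_fun (by fun_prop) continuous_const
  have hT : ∀ y ∈ U, HasDerivAt T (-k * (1 + T y ^ 2)) y := fun y hy => hasDerivAt_tan_mul_sub hy
  obtain rfl : v = fun y => a - b * T y := funext hvdef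
  have hb' := mul_sq_eq_of_sqrt_disc hB hdisc ha hb
  rw [eqOn_iterate_deriv_three hU (fun y hy => (hT y hy).affine_of_riccati a b)
      (fun y hy => (hT y hy).deriv_affine_of_riccati b)
      (fun y hy => (hT y hy).deriv_deriv_affine_of_riccati b) hr,
    ((hT r hr).affine_of_riccati a b).deriv]
  exact ode_residual_eq_zero (by rw [ha]; field_simp) hb'
    (two_mul_sq_div_sqrt_eq hB hK hKpos _ hb') _
end

section
/- For c > 0 and C₁ ∈ ℝ, the function u(x,y,t) = √(6c)·sech(√(c/2)·(C₁ - x - y + ct)) satisfies the modified Zakharov–Kuznetsov equation u_t + u²·u_x + u_{xxx} + u_{xyy} = 0. -/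
/-!
Along the characteristic `ξ = C₁ - x - y + c t` every derivative in the equation is a
derivative of the profile `φ(ξ) = a sech (k ξ)`, so the equation reduces to the ODE
`c φ' - φ² φ' - 2 φ''' = 0`. Since `sech'' = sech - 2 sech³`, we get
`φ''' = k² (1 - (6 / a²) φ²) φ'`, and the ODE holds when `c = 2 k²` and `a² = 12 k²`.
-/

open Real

noncomputable def sech (x : ℝ) : ℝ := (cosh x)⁻¹

lemma contDiff_sech {n : WithTop ℕ∞} : ContDiff ℝ n sech :=
  contDiff_cosh.inv fun x => (cosh_pos x).ne'

lemma hasDerivAt_sech (x : ℝ) : HasDerivAt sech (-sinh x * sech x ^ 2) x := by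
  refine ((hasDerivAt_cosh x).inv (cosh_pos x).ne').congr_deriv ?_
  simp only [sech, inv_pow, div_eq_mul_inv, neg_mul]

lemma deriv_sech : deriv sech = fun x => -sinh x * sech x ^ 2 :=
  funext fun x => (hasDerivAt_sech x).deriv

lemma deriv_deriv_sech : deriv (deriv sech) = fun x => sech x - 2 * sech x ^ 3 := by
  funext x
  have h : HasDerivAt (fun x => -sinh x * sech x ^ 2) _ x :=
    (hasDerivAt_sinh x).neg.mul ((hasDerivAt_sech x).pow 2)
  rw [deriv_sech, h.deriv, Pi.neg_apply]
  have hc : cosh x * sech x = 1 := mul_inv_cancel₀ (cosh_pos x).ne'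
  linear_combination (-2 * sech x ^ 3) * cosh_sq_sub_sinh_sq x
    + (2 * cosh x * sech x ^ 2 + sech x) * hc

lemma iterate_deriv_three_sech :
    deriv^[3] sech = fun x => (1 - 6 * sech x ^ 2) * deriv sech x := by
  funext x
  have h : HasDerivAt (fun x => sech x - 2 * sech x ^ 3) _ x :=
    (hasDerivAt_sech x).sub (((hasDerivAt_sech x).pow 3).const_mul 2)
  simp only [Function.iterate_succ_apply', Function.iterate_zero_apply, deriv_deriv_sech]
  rw [h.deriv, deriv_sech]
  ring

lemma deriv_comp_const_add_mul (f : ℝ → ℝ) (a c x : ℝ) :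
    deriv (fun x => f (a + c * x)) x = c * deriv f (a + c * x) := by
  rw [deriv_comp_mul_left (f := fun s => f (a + s)), deriv_comp_const_add, smul_eq_mul]

lemma iterate_deriv_comp_const_sub (n : ℕ) (f : ℝ → ℝ) (a x : ℝ) :
    deriv^[n] (fun x => f (a - x)) x = (-1) ^ n * deriv^[n] f (a - x) := by
  simpa only [iteratedDeriv_eq_iterate, smul_eq_mul] using
    congrFun (iteratedDeriv_comp_const_sub n f a) x

theorem mZK_travellingWave (φ : ℝ → ℝ) (c C₁ : ℝ) (u : ℝ → ℝ → ℝ → ℝ)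
    (hu : ∀ x y t : ℝ, u x y t = φ (C₁ - x - y + c * t)) (x y t : ℝ) :
    deriv (fun t' => u x y t') t
        + (u x y t) ^ 2 * deriv (fun x' => u x' y t) x
        + deriv^[3] (fun x' => u x' y t) x
        + deriv^[2] (fun y' => deriv (fun x' => u x' y' t) x) y
      = c * deriv φ (C₁ - x - y + c * t)
        - φ (C₁ - x - y + c * t) ^ 2 * deriv φ (C₁ - x - y + c * t)
        - 2 * deriv^[3] φ (C₁ - x - y + c * t) := by
  obtain rfl : u = fun x y t => φ (C₁ - x - y + c * t) :=
    funext fun x => funext fun y => funext (hu x y)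
  have hx_slice (y' : ℝ) :
      (fun x' => φ (C₁ - x' - y' + c * t)) = fun x' => φ ((C₁ - y' + c * t) - x') := by
    funext x'; ring_nf
  have hux_y_slice : (fun y' => deriv (fun x' => φ (C₁ - x' - y' + c * t)) x)
      = fun y' => -deriv φ ((C₁ - x + c * t) - y') := by
    funext y'
    rw [hx_slice, deriv_comp_const_sub]
    ring_nf
  have hut := deriv_comp_const_add_mul φ (C₁ - x - y) c t
  have hux := iterate_deriv_comp_const_sub 1 φ (C₁ - y + c * t) x
  have huxxx := iterate_deriv_comp_const_sub 3 φ (C₁ - y + c * t) x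
  have huxyy := iterate_deriv_comp_const_sub 2 (fun ξ => -deriv φ ξ) (C₁ - x + c * t) y
  simp only [Function.iterate_one] at hux
  simp only [Function.iterate_succ_apply, Function.iterate_zero_apply] at huxxx huxyy ⊢
  rw [hut, hx_slice, hux, huxxx, hux_y_slice, huxyy, deriv.fun_neg', deriv.fun_neg']
  ring_nf

theorem sech_soliton_ode (a k c : ℝ) (ha : a ^ 2 = 6 * c) (hk : k ^ 2 = c / 2) (ξ : ℝ) :
    let φ := fun ξ => a * sech (k * ξ)
    c * deriv φ ξ - φ ξ ^ 2 * deriv φ ξ - 2 * deriv^[3] φ ξ = 0 := by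
  intro φ
  have hφ (n : ℕ) : deriv^[n] φ ξ = a * k ^ n * deriv^[n] sech (k * ξ) := by
    simp only [φ, ← iteratedDeriv_eq_iterate, iteratedDeriv_const_mul_field,
      iteratedDeriv_comp_const_mul contDiff_sech, mul_assoc]
  have h1 := hφ 1
  simp only [Function.iterate_one] at h1
  rw [h1, hφ 3, iterate_deriv_three_sech]
  linear_combination (-a * k * sech (k * ξ) ^ 2 * deriv sech (k * ξ)) * ha
    + (-2 * a * k * (1 - 6 * sech (k * ξ) ^ 2) * deriv sech (k * ξ)) * hk

/-- The bright-soliton solution of the mZK equation with A = 0, B = M = N = 1. -/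
theorem stmt_12 (c C₁ : ℝ) (hc : 0 < c) (u : ℝ → ℝ → ℝ → ℝ)
    (hu : ∀ x y t : ℝ, u x y t = Real.sqrt (6 * c) *
      (1 / Real.cosh (Real.sqrt (c / 2) * (C₁ - x - y + c * t)))) :
    ∀ x y t : ℝ,
      deriv (fun t' => u x y t') t
        + (u x y t) ^ 2 * deriv (fun x' => u x' y t) x
        + deriv^[3] (fun x' => u x' y t) x
        + deriv^[2] (fun y' => deriv (fun x' => u x' y' t) x) y = 0 := by
  intro x y t
  have hu' (x y t : ℝ) : u x y t = √(6 * c) * sech (√(c / 2) * (C₁ - x - y + c * t)) := by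
    rw [hu, sech, one_div]
  rw [mZK_travellingWave (fun ξ => √(6 * c) * sech (√(c / 2) * ξ)) c C₁ u hu' x y t]
  exact sech_soliton_ode _ _ c (sq_sqrt (by positivity)) (sq_sqrt (by positivity)) _
end

section
/- The quartic polynomial B·z⁴ + 2A·z³ - 6c·z² - C₂·z + C₃ with B ≠ 0, C₂ = (A(A² + 6Bc) + √((A² + 4Bc)³))/B², C₃ = -(A²(A² + 6Bc) + A·√((A² + 4Bc)³) + 6B²c²)/(2B³), and A² + 4Bc > 0, factors as B·(z - φ₁)³·(z - φ₂), where φ₁ = -(A + √(A² + 4Bc))/(2B) and φ₂ = -(A - 3√(A² + 4Bc))/(2B), and φ₁ ≠ φ₂. -/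
/-!
Write `s` for the positive square root of the discriminant `A² + 4Bc`, so that `√((A² + 4Bc)³) = s³`.
Then `C₂` and `C₃` are polynomials in `A, c, s` divided by powers of `B`, and the factorisation
is a polynomial identity modulo the single relation `s² = A² + 4Bc`. The two roots differ by
`2s / B`, which is nonzero because `s > 0`.
-/

lemma Real.sqrt_pow_three {x : ℝ} (hx : 0 ≤ x) : √(x ^ 3) = √x ^ 3 := by
  rw [Real.sqrt_eq_iff_mul_self_eq (by positivity) (by positivity), ← mul_pow, Real.mul_self_sqrt hx]

section TripleRoot

variable {K : Type*} [Field K] [NeZero (2 : K)] {A B c s : K}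

theorem quartic_eq_cube_mul_of_sq_eq (hB : B ≠ 0) (hs : s ^ 2 = A ^ 2 + 4 * B * c) (z : K) :
    B * z ^ 4 + 2 * A * z ^ 3 - 6 * c * z ^ 2
        - (A * (A ^ 2 + 6 * B * c) + s ^ 3) / B ^ 2 * z
        + -(A ^ 2 * (A ^ 2 + 6 * B * c) + A * s ^ 3 + 6 * B ^ 2 * c ^ 2) / (2 * B ^ 3)
      = B * (z - -(A + s) / (2 * B)) ^ 3 * (z - -(A - 3 * s) / (2 * B)) := by
  field_simp
  linear_combination (24 * B * z * A + 24 * B ^ 2 * z ^ 2 + 3 * s ^ 2 + 9 * A ^ 2 + 12 * B * c) * hs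

theorem triple_root_sub_simple_root (hB : B ≠ 0) :
    -(A - 3 * s) / (2 * B) - -(A + s) / (2 * B) = 2 * s / B := by
  field_simp
  ring

end TripleRoot

/-- The triple-root case in the classification of the quartic polynomial P(z)
governing traveling-wave solutions of the mZK equation. -/
theorem stmt_15 (A B c C₂ C₃ φ₁ φ₂ : ℝ) (hB : B ≠ 0)
    (hdisc : 0 < A ^ 2 + 4 * B * c)
    (hC₂ : C₂ = (A * (A ^ 2 + 6 * B * c) + Real.sqrt ((A ^ 2 + 4 * B * c) ^ 3)) / B ^ 2)
    (hC₃ : C₃ = -(A ^ 2 * (A ^ 2 + 6 * B * c) + A * Real.sqrt ((A ^ 2 + 4 * B * c) ^ 3)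
      + 6 * B ^ 2 * c ^ 2) / (2 * B ^ 3))
    (hφ₁ : φ₁ = -(A + Real.sqrt (A ^ 2 + 4 * B * c)) / (2 * B))
    (hφ₂ : φ₂ = -(A - 3 * Real.sqrt (A ^ 2 + 4 * B * c)) / (2 * B)) :
    (∀ z : ℝ,
      B * z ^ 4 + 2 * A * z ^ 3 - 6 * c * z ^ 2 - C₂ * z + C₃
        = B * (z - φ₁) ^ 3 * (z - φ₂)) ∧ φ₁ ≠ φ₂ := by
  rw [Real.sqrt_pow_three hdisc.le] at hC₂ hC₃
  subst hC₂ hC₃ hφ₁ hφ₂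
  refine ⟨quartic_eq_cube_mul_of_sq_eq hB (Real.sq_sqrt hdisc.le), fun h => ?_⟩
  have hsqrt : 0 < √(A ^ 2 + 4 * B * c) := Real.sqrt_pos.mpr hdisc
  have hdiff := triple_root_sub_simple_root (A := A) (s := √(A ^ 2 + 4 * B * c)) hB
  rw [← h, sub_self] at hdiff
  exact div_ne_zero (mul_ne_zero two_ne_zero hsqrt.ne') hB hdiff.symm
end

section
/- Let B ≠ 0, A² + 4Bc > 0, K = -6(M+N)/B, φ₁ = -(A + √(A² + 4Bc))/(2B), φ₂ = -(A - 3√(A² + 4Bc))/(2B). Then v(r) = φ₁ + (φ₂ - φ₁)/(1 - ((φ₂ - φ₁)²/(4K))·(C₁ - r)²) satisfies -c·v' + A·v·v' + B·v²·v' + (M+N)·v''' = 0 wherever the denominator is nonzero. -/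
/-
Writing `v = φ₁ + w`, the fact that `φ₁` is a root of `B φ² + A φ - c` turns the equation into
`(B w² + (A + 2 B φ₁) w) w' + (M + N) w''' = 0`, and `A + 2 B φ₁ = -(φ₂ - φ₁) B / 2`.
The profile `w = a / (1 - k u²)`, with `a = φ₂ - φ₁`, `k = a² / (4 K)`, `u = C₁ - r`, satisfies
`w'² = (4 k / a²) (w⁴ - a w³)`, hence `w''' = (24 k / a²) (w² - a w / 2) w'`, which is the reduced equation exactly when
`24 (M + N) k = -a² B`; this is what the choice of `K` arranges.
-/

open Set

theorem HasDerivAt.div_pow_succ {p d : ℝ → ℝ} {p' d' x : ℝ} (n : ℕ) (hp : HasDerivAt p p' x)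
    (hd : HasDerivAt d d' x) (hx : d x ≠ 0) :
    HasDerivAt (fun y => p y / d y ^ (n + 1))
      ((p' * d x - (n + 1) * p x * d') / d x ^ (n + 2)) x := by
  refine (hp.div (hd.pow (n + 1)) (pow_ne_zero _ hx)).congr_deriv ?_
  simp only [Pi.pow_apply]
  push_cast
  field_simp
  ring

section Profile

variable {a k C x : ℝ}

theorem hasDerivAt_one_sub_mul_sq :
    HasDerivAt (fun y => 1 - k * (C - y) ^ 2) (2 * k * (C - x)) x := by
  refine ((((hasDerivAt_id x).const_sub C).pow 2).const_mul k).const_sub 1 |>.congr_deriv ?_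
  simp only [id]
  ring

theorem hasDerivAt_profile (hx : 1 - k * (C - x) ^ 2 ≠ 0) :
    HasDerivAt (fun y => a / (1 - k * (C - y) ^ 2))
      (-2 * a * k * (C - x) / (1 - k * (C - x) ^ 2) ^ 2) x := by
  have h := (hasDerivAt_const x a).div_pow_succ 0 hasDerivAt_one_sub_mul_sq hx
  simp only [pow_one, zero_add] at h
  exact h.congr_deriv (by ring)

theorem hasDerivAt_profile_deriv (hx : 1 - k * (C - x) ^ 2 ≠ 0) :
    HasDerivAt (fun y => -2 * a * k * (C - y) / (1 - k * (C - y) ^ 2) ^ 2)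
      (2 * a * k * (1 + 3 * k * (C - x) ^ 2) / (1 - k * (C - x) ^ 2) ^ 3) x := by
  have hp : HasDerivAt (fun y => -2 * a * k * (C - y)) (2 * a * k) x :=
    ((hasDerivAt_id x).const_sub C).const_mul (-2 * a * k) |>.congr_deriv (by ring)
  refine (hp.div_pow_succ 1 hasDerivAt_one_sub_mul_sq hx).congr_deriv ?_
  field_simp
  ring

theorem hasDerivAt_profile_deriv2 (hx : 1 - k * (C - x) ^ 2 ≠ 0) :
    HasDerivAt (fun y => 2 * a * k * (1 + 3 * k * (C - y) ^ 2) / (1 - k * (C - y) ^ 2) ^ 3)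
      (-24 * a * k ^ 2 * (C - x) * (1 + k * (C - x) ^ 2) / (1 - k * (C - x) ^ 2) ^ 4) x := by
  have hp : HasDerivAt (fun y => 2 * a * k * (1 + 3 * k * (C - y) ^ 2))
      (-12 * a * k ^ 2 * (C - x)) x :=
    ((((hasDerivAt_id x).const_sub C).pow 2).const_mul (3 * k)).const_add 1
      |>.const_mul (2 * a * k) |>.congr_deriv (by simp only [id]; ring)
  refine (hp.div_pow_succ 2 hasDerivAt_one_sub_mul_sq hx).congr_deriv ?_
  field_simp
  ring

theorem iterate_deriv_three_profile (hx : 1 - k * (C - x) ^ 2 ≠ 0) :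
    deriv^[3] (fun y => a / (1 - k * (C - y) ^ 2)) x
      = -24 * a * k ^ 2 * (C - x) * (1 + k * (C - x) ^ 2) / (1 - k * (C - x) ^ 2) ^ 4 := by
  have hS : IsOpen {y : ℝ | 1 - k * (C - y) ^ 2 ≠ 0} :=
    isOpen_ne_fun (by fun_prop) continuous_const
  have h₁ : EqOn (deriv fun y => a / (1 - k * (C - y) ^ 2))
      (fun y => -2 * a * k * (C - y) / (1 - k * (C - y) ^ 2) ^ 2) {y | 1 - k * (C - y) ^ 2 ≠ 0} :=
    fun y hy => (hasDerivAt_profile hy).deriv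
  have h₂ : EqOn (deriv^[2] fun y => a / (1 - k * (C - y) ^ 2))
      (fun y => 2 * a * k * (1 + 3 * k * (C - y) ^ 2) / (1 - k * (C - y) ^ 2) ^ 3)
      {y | 1 - k * (C - y) ^ 2 ≠ 0} := fun y hy => by
    rw [Function.iterate_succ_apply', Function.iterate_one, h₁.deriv hS hy]
    exact (hasDerivAt_profile_deriv hy).deriv
  rw [Function.iterate_succ_apply', h₂.deriv hS hx]
  exact (hasDerivAt_profile_deriv2 hx).deriv

theorem profile_ode {B μ : ℝ} {w : ℝ → ℝ} (hw : w = fun y => a / (1 - k * (C - y) ^ 2))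
    (hμ : 24 * μ * k = -(a ^ 2 * B)) (hx : 1 - k * (C - x) ^ 2 ≠ 0) :
    (B * w x ^ 2 - a * B / 2 * w x) * deriv w x + μ * deriv^[3] w x = 0 := by
  subst hw
  rw [(hasDerivAt_profile hx).deriv, iterate_deriv_three_profile hx]
  field_simp
  linear_combination (-(a * k * (C - x) * (1 + k * (C - x) ^ 2))) * hμ

end Profile

/-- The algebraically decaying solution corresponding to the triple-root case of
the quartic polynomial P. -/
theorem stmt_16 (A B M N c C₁ K φ₁ φ₂ : ℝ) (hB : B ≠ 0) (hMN : M + N ≠ 0)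
    (hdisc : 0 < A ^ 2 + 4 * B * c)
    (hK : K = -6 * (M + N) / B)
    (hφ₁ : φ₁ = -(A + Real.sqrt (A ^ 2 + 4 * B * c)) / (2 * B))
    (hφ₂ : φ₂ = -(A - 3 * Real.sqrt (A ^ 2 + 4 * B * c)) / (2 * B))
    (v : ℝ → ℝ)
    (hvdef : ∀ r : ℝ, v r = φ₁ + (φ₂ - φ₁) /
      (1 - ((φ₂ - φ₁) ^ 2 / (4 * K)) * (C₁ - r) ^ 2)) :
    ∀ r : ℝ, 1 - ((φ₂ - φ₁) ^ 2 / (4 * K)) * (C₁ - r) ^ 2 ≠ 0 →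
      -c * deriv v r + A * v r * deriv v r + B * (v r) ^ 2 * deriv v r
        + (M + N) * deriv^[3] v r = 0 := by
  intro r hr
  set w : ℝ → ℝ := fun y => (φ₂ - φ₁) / (1 - ((φ₂ - φ₁) ^ 2 / (4 * K)) * (C₁ - y) ^ 2)
  have hroot : B * φ₁ ^ 2 + A * φ₁ - c = 0 := by
    have hs := Real.sq_sqrt hdisc.le
    generalize Real.sqrt (A ^ 2 + 4 * B * c) = s at hs hφ₁
    rw [hφ₁]
    field_simp
    linear_combination hs
  have hlin : A + 2 * B * φ₁ + (φ₂ - φ₁) * B / 2 = 0 := by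
    rw [hφ₁, hφ₂]
    field_simp
    ring
  have hμ : 24 * (M + N) * ((φ₂ - φ₁) ^ 2 / (4 * K)) = -((φ₂ - φ₁) ^ 2 * B) := by
    rw [hK]
    field_simp
    ring
  have hv : v = fun y => φ₁ + w y := funext hvdef
  have hderiv : deriv v = deriv w := hv ▸ deriv_const_add' φ₁
  have hderiv3 : deriv^[3] v = deriv^[3] w := by
    simp only [Function.iterate_succ, Function.comp_apply, hderiv]
  rw [hderiv, hderiv3, hvdef r]
  linear_combination profile_ode rfl hμ hr + deriv w r * hroot
    + deriv w r * w r * hlin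
end

section
/- Let λ > 0 and A² - 6Bλ(M+N) > 0, and c = -λ(M+N), M + N ≠ 0. Then u(x,y,t) = -6λ(M+N)/(√(A² - 6Bλ(M+N))·cos(√λ·(x + y - ct)) + A) satisfies u_t + A·u·u_x + B·u²·u_x + M·u_{xxx} + N·u_{xyy} = 0 wherever defined. -/
/-!
The solution is a travelling wave `u = φ (x + y - c t)` with profile
`φ ξ = K / (s cos (r ξ) + A)`, which reduces the mZK equation to the ODE
`(-c + A φ + B φ²) φ' + (M + N) φ''' = 0`. This is the derivative of
`(M + N) φ'' = c φ - A φ² / 2 - B φ³ / 3`, and the latter holds identically: both sides are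
rational in `cos (r ξ)`, and they agree thanks to `sin² + cos² = 1` and the relations
`K = 6 c`, `(M + N) r² = -c`, `s² = A² + 6 B c` between the parameters.
-/

open Real Filter Topology

theorem mZK_lhs_of_travelingWave (A B M N c : ℝ) (φ : ℝ → ℝ) (u : ℝ → ℝ → ℝ → ℝ)
    (hu : ∀ x y t, u x y t = φ (x + y - c * t)) (x y t : ℝ) :
    deriv (fun t' => u x y t') t
        + A * u x y t * deriv (fun x' => u x' y t) x
        + B * (u x y t) ^ 2 * deriv (fun x' => u x' y t) x
        + M * deriv^[3] (fun x' => u x' y t) x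
        + N * deriv^[2] (fun y' => deriv (fun x' => u x' y' t) x) y
      = (-c + A * φ (x + y - c * t) + B * φ (x + y - c * t) ^ 2) * deriv φ (x + y - c * t)
        + (M + N) * deriv^[3] φ (x + y - c * t) := by
  have hx : ∀ y', (fun x' => u x' y' t) = fun x' => φ (x' + (y' - c * t)) := fun y' =>
    funext fun x' => by rw [hu, add_sub_assoc]
  have hdt : deriv (fun t' => u x y t') t = -c * deriv φ (x + y - c * t) := by
    have h := deriv_comp_mul_left c (fun w => φ (x + y - w)) t
    simp only [deriv_comp_const_sub, smul_eq_mul] at h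
    simp only [hu, h]
    ring
  have hdx : ∀ n, deriv^[n] (fun x' => u x' y t) x = deriv^[n] φ (x + y - c * t) := by
    intro n
    rw [hx, ← iteratedDeriv_eq_iterate, iteratedDeriv_comp_add_const, iteratedDeriv_eq_iterate,
      add_sub_assoc]
  have hdxy : deriv^[2] (fun y' => deriv (fun x' => u x' y' t) x) y
      = deriv^[3] φ (x + y - c * t) := by
    have h : (fun y' => deriv (fun x' => u x' y' t) x)
        = fun y' => deriv φ (y' + (x - c * t)) := funext fun y' => by
      rw [hx, deriv_comp_add_const, add_sub_left_comm]
    rw [h, ← iteratedDeriv_eq_iterate, iteratedDeriv_comp_add_const, iteratedDeriv_eq_iterate,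
      ← Function.iterate_succ_apply]
    exact congrArg _ (by ring)
  have hdx1 : deriv (fun x' => u x' y t) x = deriv φ (x + y - c * t) := hdx 1
  rw [hdt, hdx1, hdx 3, hdxy, hu]
  ring

noncomputable def periodicWave (K s r A : ℝ) (ξ : ℝ) : ℝ := K / (s * cos (r * ξ) + A)

section periodicWave

variable {K s r A ξ : ℝ}

lemma eventually_periodicWave_denom_ne (hξ : s * cos (r * ξ) + A ≠ 0) :
    ∀ᶠ v in 𝓝 ξ, s * cos (r * v) + A ≠ 0 :=
  (by fun_prop : Continuous fun v => s * cos (r * v) + A).continuousAt.eventually_ne hξ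

lemma hasDerivAt_periodicWave (hξ : s * cos (r * ξ) + A ≠ 0) :
    HasDerivAt (periodicWave K s r A)
      (K * s * r * sin (r * ξ) / (s * cos (r * ξ) + A) ^ 2) ξ := by
  have hD := ((((hasDerivAt_id ξ).const_mul r).cos).const_mul s).add_const A
  refine ((hasDerivAt_const ξ K).div hD hξ).congr_deriv ?_
  simp only [id]
  field_simp
  ring

lemma iterate_deriv_two_periodicWave (hξ : s * cos (r * ξ) + A ≠ 0) :
    deriv^[2] (periodicWave K s r A) ξ
      = K * s * r ^ 2 * (cos (r * ξ) * (s * cos (r * ξ) + A) + 2 * s * sin (r * ξ) ^ 2)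
        / (s * cos (r * ξ) + A) ^ 3 := by
  have hφ' : deriv (periodicWave K s r A)
      =ᶠ[𝓝 ξ] fun v => K * s * r * sin (r * v) / (s * cos (r * v) + A) ^ 2 :=
    (eventually_periodicWave_denom_ne hξ).mono fun v hv => (hasDerivAt_periodicWave hv).deriv
  have hrξ := (hasDerivAt_id ξ).const_mul r
  have hD := (((hrξ.cos).const_mul s).add_const A).pow 2
  have h := ((hrξ.sin).const_mul (K * s * r)).div hD (pow_ne_zero 2 hξ)
  rw [Function.iterate_succ_apply', Function.iterate_one, hφ'.deriv_eq]
  refine (h.congr_deriv ?_).deriv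
  simp only [id, Pi.pow_apply]
  field_simp
  ring

variable {B μ c : ℝ}

theorem periodicWave_ode (hK : K = 6 * c) (hr : μ * r ^ 2 = -c) (hs : s ^ 2 = A ^ 2 + 6 * B * c)
    (hξ : s * cos (r * ξ) + A ≠ 0) :
    μ * deriv^[2] (periodicWave K s r A) ξ
      = c * periodicWave K s r A ξ - A / 2 * periodicWave K s r A ξ ^ 2
        - B / 3 * periodicWave K s r A ξ ^ 3 := by
  rw [iterate_deriv_two_periodicWave hξ, periodicWave]
  subst hK
  field_simp
  linear_combination 6 * c * s * (cos (r * ξ) * (s * cos (r * ξ) + A) + 2 * s * sin (r * ξ) ^ 2) * hr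
    - 12 * c ^ 2 * s ^ 2 * sin_sq_add_cos_sq (r * ξ) - 12 * c ^ 2 * hs

theorem periodicWave_travelingWave_ode (hK : K = 6 * c) (hr : μ * r ^ 2 = -c)
    (hs : s ^ 2 = A ^ 2 + 6 * B * c) (hμ : μ ≠ 0) (hξ : s * cos (r * ξ) + A ≠ 0) :
    (-c + A * periodicWave K s r A ξ + B * periodicWave K s r A ξ ^ 2)
        * deriv (periodicWave K s r A) ξ
      + μ * deriv^[3] (periodicWave K s r A) ξ = 0 := by
  set φ := periodicWave K s r A
  have hφ'' : deriv^[2] φ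
      =ᶠ[𝓝 ξ] fun v => (c * φ v - A / 2 * φ v ^ 2 - B / 3 * φ v ^ 3) / μ :=
    (eventually_periodicWave_denom_ne hξ).mono fun v hv => by
      rw [eq_div_iff hμ, mul_comm, periodicWave_ode hK hr hs hv]
  have hφ := (hasDerivAt_periodicWave (K := K) hξ).differentiableAt.hasDerivAt
  have h : HasDerivAt (fun v => (c * φ v - A / 2 * φ v ^ 2 - B / 3 * φ v ^ 3) / μ) _ ξ :=
    (((hφ.const_mul c).sub ((hφ.pow 2).const_mul (A / 2))).sub
      ((hφ.pow 3).const_mul (B / 3))).div_const μ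
  rw [Function.iterate_succ_apply', hφ''.deriv_eq, h.deriv]
  field_simp
  ring

end periodicWave

/-- The periodic solution of the mZK equation (Iqbal et al., Case 1), with wave
speed c = -λ(M+N). -/
theorem stmt_17 (A B M N lam c : ℝ) (hlam : 0 < lam) (hMN : M + N ≠ 0)
    (hdisc : 0 < A ^ 2 - 6 * B * lam * (M + N))
    (hc : c = -lam * (M + N))
    (u : ℝ → ℝ → ℝ → ℝ)
    (hu : ∀ x y t : ℝ, u x y t = -6 * lam * (M + N) /
      (Real.sqrt (A ^ 2 - 6 * B * lam * (M + N)) *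
        Real.cos (Real.sqrt lam * (x + y - c * t)) + A)) :
    ∀ x y t : ℝ,
      Real.sqrt (A ^ 2 - 6 * B * lam * (M + N)) *
        Real.cos (Real.sqrt lam * (x + y - c * t)) + A ≠ 0 →
      deriv (fun t' => u x y t') t
        + A * u x y t * deriv (fun x' => u x' y t) x
        + B * (u x y t) ^ 2 * deriv (fun x' => u x' y t) x
        + M * deriv^[3] (fun x' => u x' y t) x
        + N * deriv^[2] (fun y' => deriv (fun x' => u x' y' t) x) y = 0 := by
  intro x y t hden
  rw [mZK_lhs_of_travelingWave A B M N c
    (periodicWave (-6 * lam * (M + N)) (√(A ^ 2 - 6 * B * lam * (M + N))) (√lam) A) u hu]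
  refine periodicWave_travelingWave_ode (B := B) ?_ ?_ ?_ hMN hden
  · rw [hc]; ring
  · rw [sq_sqrt hlam.le, hc]; ring
  · rw [sq_sqrt hdisc.le, hc]; ring
end

section
/- Let B(M+N) < 0, λ = A²/(6B(M+N)) (so λ < 0), and c = -A²/(6B). Then u(x,y,t) = -(A/(2B))·(1 + coth(√(-λ)·(x+y-ct)) + csch(√(-λ)·(x+y-ct))) satisfies u_t + A·u·u_x + B·u²·u_x + M·u_{xxx} + N·u_{xyy} = 0 wherever defined. -/
/-!
Along `ξ = x + y - c t` the mZK operator becomes `(-c + A F + B F²) F' + (M + N) F'''`.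
The profile `F = a (1 + coth (k ξ / 2))`, `a = -A / (2B)`, solves the Riccati equation
`F' = k F + (k B / A) F²`, so `F'''` is `F'` times a quadratic polynomial in `F`, and the ODE
becomes a polynomial identity in `F`; it holds because `(M + N) k² = -λ (M + N) = c = -A² / (6B)`.
-/

open Filter Topology Real

theorem deriv_iterate_comp_add_const (n : ℕ) (f : ℝ → ℝ) (a x : ℝ) :
    deriv^[n] (fun z => f (z + a)) x = deriv^[n] f (x + a) := by
  simp only [← iteratedDeriv_eq_iterate, iteratedDeriv_comp_add_const]

theorem mzk_travelingWave {u : ℝ → ℝ → ℝ → ℝ} (A B M N c : ℝ) {F : ℝ → ℝ}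
    (hu : ∀ x y t, u x y t = F (x + y - c * t)) (x y t : ℝ) :
    deriv (fun t' => u x y t') t
        + A * u x y t * deriv (fun x' => u x' y t) x
        + B * (u x y t) ^ 2 * deriv (fun x' => u x' y t) x
        + M * deriv^[3] (fun x' => u x' y t) x
        + N * deriv^[2] (fun y' => deriv (fun x' => u x' y' t) x) y
      = (-c + A * F (x + y - c * t) + B * F (x + y - c * t) ^ 2) * deriv F (x + y - c * t)
        + (M + N) * deriv^[3] F (x + y - c * t) := by
  have hx : ∀ y' t', (fun x' => u x' y' t') = fun x' => F (x' + (y' - c * t')) := by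
    intro y' t'; funext x'; rw [hu]; ring_nf
  have ht : deriv (fun t' => u x y t') t = -c * deriv F (x + y - c * t) := by
    simp only [hu]
    rw [deriv_comp_mul_left c (fun s => F (x + y - s)), deriv_comp_const_sub, smul_eq_mul,
      mul_neg, neg_mul]
  have hy : (fun y' => deriv (fun x' => u x' y' t) x)
      = fun y' => deriv F (y' + (x - c * t)) := by
    funext y'; rw [hx, deriv_comp_add_const]; ring_nf
  have hξ : y + (x - c * t) = x + y - c * t := by ring
  have hξ' : x + (y - c * t) = x + y - c * t := by ring
  rw [ht, hx, hy, deriv_comp_add_const,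
    deriv_iterate_comp_add_const, deriv_iterate_comp_add_const, hξ, hξ', hu,
    ← Function.iterate_succ_apply]
  ring

section AutonomousODE

variable {P P' P'' F : ℝ → ℝ} {s : Set ℝ} {z : ℝ}

theorem deriv_eventuallyEq_of_autonomous (hs : IsOpen s)
    (hF : ∀ w ∈ s, HasDerivAt F (P (F w)) w) (hz : z ∈ s) :
    deriv F =ᶠ[𝓝 z] fun w => P (F w) :=
  eventually_of_mem (hs.mem_nhds hz) fun w hw => (hF w hw).deriv

theorem iterate_deriv_two_eventuallyEq_of_autonomous (hP : ∀ v, HasDerivAt P (P' v) v)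
    (hs : IsOpen s) (hF : ∀ w ∈ s, HasDerivAt F (P (F w)) w) (hz : z ∈ s) :
    deriv^[2] F =ᶠ[𝓝 z] fun w => P' (F w) * P (F w) := by
  filter_upwards [hs.mem_nhds hz] with w hw
  rw [Function.iterate_succ_apply', Function.iterate_one,
    (deriv_eventuallyEq_of_autonomous hs hF hw).deriv_eq]
  exact ((hP (F w)).comp w (hF w hw)).deriv

theorem iterate_deriv_three_of_autonomous (hP : ∀ v, HasDerivAt P (P' v) v)
    (hP' : ∀ v, HasDerivAt P' (P'' v) v) (hs : IsOpen s)
    (hF : ∀ w ∈ s, HasDerivAt F (P (F w)) w) (hz : z ∈ s) :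
    deriv^[3] F z = (P'' (F z) * P (F z) + P' (F z) ^ 2) * P (F z) := by
  rw [Function.iterate_succ_apply',
    (iterate_deriv_two_eventuallyEq_of_autonomous hP hs hF hz).deriv_eq]
  have hFz := hF z hz
  exact ((((hP' (F z)).comp z hFz).mul ((hP (F z)).comp z hFz)).congr_deriv
    (by simp only [Function.comp_apply]; ring)).deriv

end AutonomousODE

theorem hasDerivAt_quadratic (α β v : ℝ) :
    HasDerivAt (fun w => α * w ^ 2 + β * w) (2 * α * v + β) v :=
  (((hasDerivAt_pow 2 v).const_mul α).add ((hasDerivAt_id v).const_mul β)).congr_deriv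
    (by simp only [Nat.cast_ofNat]; ring)

/-- `(1 + cosh z) / sinh z = coth (z / 2)`, so this is `a (1 + coth (k ξ / 2))`. -/
noncomputable def kinkProfile (a k ξ : ℝ) : ℝ :=
  a * (1 + cosh (k * ξ) / sinh (k * ξ) + 1 / sinh (k * ξ))

theorem hasDerivAt_kinkProfile (a k : ℝ) {ξ : ℝ} (hξ : sinh (k * ξ) ≠ 0) :
    HasDerivAt (kinkProfile a k)
      (-(k / (2 * a)) * kinkProfile a k ξ ^ 2 + k * kinkProfile a k ξ) ξ := by
  have hlin : HasDerivAt (fun ξ => k * ξ) k ξ := by simpa using (hasDerivAt_id ξ).const_mul k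
  have hcosh := (hasDerivAt_cosh (k * ξ)).comp ξ hlin
  have hsinh := (hasDerivAt_sinh (k * ξ)).comp ξ hlin
  have h := (((hasDerivAt_const ξ 1).add (hcosh.div hsinh hξ)).add
    ((hasDerivAt_const ξ 1).div hsinh hξ)).const_mul a
  refine h.congr_deriv ?_
  rcases eq_or_ne a 0 with rfl | ha
  · simp [kinkProfile]
  simp only [kinkProfile, Function.comp_apply]
  field_simp
  linear_combination (-k) * cosh_sq (k * ξ)

theorem kinkProfile_mzk_ode {A B M N k c : ℝ} (hA : A ≠ 0) (hB : B ≠ 0)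
    (hc : c = -A ^ 2 / (6 * B)) (hk : (M + N) * k ^ 2 = c) {ξ : ℝ} (hξ : sinh (k * ξ) ≠ 0) :
    let F := kinkProfile (-(A / (2 * B))) k
    (-c + A * F ξ + B * F ξ ^ 2) * deriv F ξ + (M + N) * deriv^[3] F ξ = 0 := by
  intro F
  subst hc
  have hα : -(k / (2 * -(A / (2 * B)))) = k * B / A := by field_simp
  have hF : ∀ ξ ∈ {ξ | sinh (k * ξ) ≠ 0},
      HasDerivAt F ((fun w => k * B / A * w ^ 2 + k * w) (F ξ)) ξ :=
    fun ξ hξ => hα ▸ hasDerivAt_kinkProfile _ k hξ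
  have hs : IsOpen {ξ | sinh (k * ξ) ≠ 0} := isOpen_ne_fun (by fun_prop) continuous_const
  rw [(hF ξ hξ).deriv, iterate_deriv_three_of_autonomous (hasDerivAt_quadratic _ k)
    (fun v => by simpa using ((hasDerivAt_id v).const_mul _).add_const k) hs hF hξ]
  field_simp at hk ⊢
  linear_combination k * F ξ * (A + B * F ξ) * (A ^ 2 + 6 * A * B * F ξ + 6 * B ^ 2 * F ξ ^ 2) * hk

/-- The singular kink solution of the mZK equation corresponding to two real
double roots of P (Iqbal et al., Case 2), with c = -A²/(6B). -/
theorem stmt_18 (A B M N lam c : ℝ) (hB : B * (M + N) < 0)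
    (hlam : lam = A ^ 2 / (6 * B * (M + N)))
    (hc : c = -A ^ 2 / (6 * B))
    (u : ℝ → ℝ → ℝ → ℝ)
    (hu : ∀ x y t : ℝ, u x y t = -(A / (2 * B)) *
      (1 + Real.cosh (Real.sqrt (-lam) * (x + y - c * t)) /
            Real.sinh (Real.sqrt (-lam) * (x + y - c * t))
         + 1 / Real.sinh (Real.sqrt (-lam) * (x + y - c * t)))) :
    ∀ x y t : ℝ,
      Real.sinh (Real.sqrt (-lam) * (x + y - c * t)) ≠ 0 →
      deriv (fun t' => u x y t') t
        + A * u x y t * deriv (fun x' => u x' y t) x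
        + B * (u x y t) ^ 2 * deriv (fun x' => u x' y t) x
        + M * deriv^[3] (fun x' => u x' y t) x
        + N * deriv^[2] (fun y' => deriv (fun x' => u x' y' t) x) y = 0 := by
  intro x y t hξ
  have hB0 : B ≠ 0 := by rintro rfl; simp at hB
  have hA : A ≠ 0 := by rintro rfl; simp [hlam] at hξ
  have hk : (M + N) * √(-lam) ^ 2 = c := by
    have hMN : M + N ≠ 0 := by rintro h; simp [h] at hB
    have hlam0 : lam ≤ 0 := by
      rw [hlam]; exact div_nonpos_of_nonneg_of_nonpos (sq_nonneg A) (by nlinarith)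
    rw [sq_sqrt (by linarith), hlam, hc]; field_simp
  rw [mzk_travelingWave A B M N c (F := kinkProfile (-(A / (2 * B))) √(-lam)) hu]
  exact kinkProfile_mzk_ode hA hB0 hc hk hξ
end
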